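/- Let f(k) = Σ_{j=1}^K (k_{j1}² + k_{j2}² + 2k_{j3}²) + 2α Σ_{1≤j<i≤K} (k_{j1}k_{i1} + k_{j2}k_{i2} + 2k_{j3}k_{i3}) subject to k_{j1},k_{j2} ≥ 0, k_{j3}² ≤ k_{j1}k_{j2}, and k_{j1}+k_{j2}=1 for all j, with 0<α<1. Then the point k_{j1}=k_{j2}=1/2, k_{j3}=0 for all j is a global minimizer of f. -/

import Mathlib

/-!
Let `Q_α(x) = ∑ xᵢ² + 2α ∑_{i<j} xᵢxⱼ = (1 - α) ∑ xᵢ² + α (∑ xᵢ)²`, which is nonnegative for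
`0 ≤ α ≤ 1`. The objective splits as `f(k) = Q_α(a) + Q_α(b) + 2 Q_α(c)` in the three coordinate
vectors `a, b, c`. On the constraint `a + b = 1` write `a = u + v`, `b = u - v` with `u ≡ 1/2`;
the parallelogram law for the quadratic form `Q_α` then gives
`f(k) = 2 Q_α(u) + 2 Q_α(v) + 2 Q_α(c) = f(k*) + 2 Q_α(v) + 2 Q_α(c) ≥ f(k*)`.
-/

open Finset

/-- The quadratic objective in the scalar variables `k_{j1}, k_{j2}, k_{j3}`. -/
def fObj {K : ℕ} (α : ℝ) (k : Fin K → ℝ × ℝ × ℝ) : ℝ :=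
  (∑ j, ((k j).1 ^ 2 + (k j).2.1 ^ 2 + 2 * (k j).2.2 ^ 2)) +
    2 * α * ∑ j, ∑ i ∈ Finset.Ioi j,
      ((k j).1 * (k i).1 + (k j).2.1 * (k i).2.1 + 2 * (k j).2.2 * (k i).2.2)

section
variable {ι : Type*} [Fintype ι] [LinearOrder ι] [LocallyFiniteOrderTop ι]
  [LocallyFiniteOrderBot ι]

lemma sq_sum_eq_sum_sq_add_two_mul_sum_sum_Ioi {R : Type*} [CommSemiring R] (x : ι → R) :
    (∑ i, x i) ^ 2 = ∑ i, x i ^ 2 + 2 * ∑ i, ∑ j ∈ Ioi i, x i * x j := by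
  have hoff := sum_sum_Ioi_add_eq_sum_sum_off_diag fun j i => x i * x j
  calc (∑ i, x i) ^ 2 = ∑ i, (x i ^ 2 + ∑ j ∈ {i}ᶜ, x i * x j) := by
        rw [sq, sum_mul_sum]
        exact sum_congr rfl fun i _ => by rw [sq, Fintype.sum_eq_add_sum_compl i]
    _ = ∑ i, x i ^ 2 + 2 * ∑ i, ∑ j ∈ Ioi i, x i * x j := by
        rw [sum_add_distrib, ← hoff, mul_sum]
        congr 1
        exact sum_congr rfl fun i _ => by rw [mul_sum]; exact sum_congr rfl fun j _ => by ring

/-- The quadratic form of the matrix with unit diagonal and every off-diagonal entry `α`. -/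
def crossForm (α : ℝ) (x : ι → ℝ) : ℝ :=
  ∑ i, x i ^ 2 + 2 * α * ∑ i, ∑ j ∈ Ioi i, x i * x j

lemma crossForm_eq (α : ℝ) (x : ι → ℝ) :
    crossForm α x = (1 - α) * ∑ i, x i ^ 2 + α * (∑ i, x i) ^ 2 := by
  rw [crossForm, sq_sum_eq_sum_sq_add_two_mul_sum_sum_Ioi]
  ring

lemma crossForm_nonneg {α : ℝ} (h₀ : 0 ≤ α) (h₁ : α ≤ 1) (x : ι → ℝ) :
    0 ≤ crossForm α x := by
  have hsq : 0 ≤ ∑ i, x i ^ 2 := sum_nonneg fun i _ => sq_nonneg (x i)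
  have hα : 0 ≤ 1 - α := by linarith
  rw [crossForm_eq]
  positivity

lemma crossForm_add_add_crossForm_sub (α : ℝ) (x y : ι → ℝ) :
    crossForm α (x + y) + crossForm α (x - y) = 2 * crossForm α x + 2 * crossForm α y := by
  have hsq : ∑ i, (x i + y i) ^ 2 + ∑ i, (x i - y i) ^ 2
      = 2 * ∑ i, x i ^ 2 + 2 * ∑ i, y i ^ 2 := by
    rw [← sum_add_distrib, mul_sum, mul_sum, ← sum_add_distrib]
    exact sum_congr rfl fun i _ => by ring
  simp only [crossForm_eq, Pi.add_apply, Pi.sub_apply, sum_add_distrib, sum_sub_distrib]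
  linear_combination (1 - α) * hsq

end

lemma fObj_eq_crossForm {K : ℕ} (α : ℝ) (k : Fin K → ℝ × ℝ × ℝ) :
    fObj α k = crossForm α (fun j => (k j).1) + crossForm α (fun j => (k j).2.1)
      + 2 * crossForm α (fun j => (k j).2.2) := by
  simp only [fObj, crossForm, sum_add_distrib, mul_assoc, ← mul_sum]
  ring

theorem stmt5_general (K : ℕ) (α : ℝ) (hα : 0 < α) (hα1 : α < 1)
    (k : Fin K → ℝ × ℝ × ℝ)
    (h4 : ∀ j, (k j).1 + (k j).2.1 = 1) :
    fObj (K := K) α (fun _ : Fin K => ((1 / 2 : ℝ), (1 / 2 : ℝ), (0 : ℝ))) ≤ fObj α k := by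
  set u : Fin K → ℝ := fun _ => 1 / 2
  set v : Fin K → ℝ := fun j => ((k j).1 - (k j).2.1) / 2
  have ha : (fun j => (k j).1) = u + v := funext fun j => by
    simp only [u, v, Pi.add_apply]; linarith [h4 j]
  have hb : (fun j => (k j).2.1) = u - v := funext fun j => by
    simp only [u, v, Pi.sub_apply]; linarith [h4 j]
  have hmin : fObj α (fun _ : Fin K => ((1 / 2 : ℝ), (1 / 2 : ℝ), (0 : ℝ)))
      = 2 * crossForm α u := by
    have hzero : crossForm α (fun _ : Fin K => (0 : ℝ)) = 0 := by simp [crossForm]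
    rw [fObj_eq_crossForm, hzero]
    ring
  rw [hmin, fObj_eq_crossForm, ha, hb, crossForm_add_add_crossForm_sub]
  linarith [crossForm_nonneg hα.le hα1.le v, crossForm_nonneg hα.le hα1.le fun j => (k j).2.2]

/-- The point `k_{j1} = k_{j2} = 1/2, k_{j3} = 0` is a global minimizer of `f`
on the feasible region. -/
theorem stmt5 (K : ℕ) (hK : 1 ≤ K) (α : ℝ) (hα : 0 < α) (hα1 : α < 1)
    (k : Fin K → ℝ × ℝ × ℝ)
    (h1 : ∀ j, 0 ≤ (k j).1) (h2 : ∀ j, 0 ≤ (k j).2.1)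
    (h3 : ∀ j, (k j).2.2 ^ 2 ≤ (k j).1 * (k j).2.1)
    (h4 : ∀ j, (k j).1 + (k j).2.1 = 1) :
    fObj (K := K) α (fun _ : Fin K => ((1 / 2 : ℝ), (1 / 2 : ℝ), (0 : ℝ))) ≤ fObj α k :=
  stmt5_general K α hα hα1 k h4
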